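/- arXiv:2003.13291 — 4 statements merged into one kernel-verified Lean document; each statement's English description precedes it below -/
import Mathlib

section
/- If a set P of n red and n blue points in convex position admits a separated bichromatic matching with k segments (a non-crossing properly-colored matching all of whose segments are crossed by a common line), then P admits a non-crossing alternating path of length 2k (a sequence of 2k distinct points, consecutive points having different colors, whose segments are pairwise non-crossing). -/
/-!
Orient every segment of the matching from its endpoint on one closed side of the common line
to its endpoint on the other. In convex position no line separates four points in alternation,
so the first endpoints occupy an arc of the cyclic order and the second endpoints the following
arc; disjointness then forces the segments to be nested. Hence, listing the `2K` endpoints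
cyclically, the `i`-th and the `(2K - 1 - i)`-th are the two ends of a segment and have different
colors: they form an antipalindromic cyclic subsequence. The zigzag that runs through these
pairs from the outside in, entering each pair at its red point, alternates in color, and two of
its edges never interleave in the cyclic order, so in convex position they do not cross.
-/

open scoped BigOperators

namespace SepMatchPaper

/-- Orientation cross product of the triple `(o, a, b)` in the plane. -/
def cross (o a b : ℝ × ℝ) : ℝ :=
  (a.1 - o.1) * (b.2 - o.2) - (a.2 - o.2) * (b.1 - o.1)

/-- The first `m` points of `p` are in convex position, listed in clockwise
order: every triple of points, taken in index order, is oriented clockwise. -/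
def ConvexCW (m : ℕ) (p : ℕ → ℝ × ℝ) : Prop :=
  ∀ i j l : ℕ, i < j → j < l → l < m → cross (p i) (p j) (p l) < 0

/-- Number of indices of color `b` in the finite set `S` (true = red, false = blue). -/
def cnt (c : ℕ → Bool) (b : Bool) (S : Finset ℕ) : ℕ :=
  (S.filter fun x => c x = b).card

/-- The coloring `c` of the `2n` points has exactly `n` red and `n` blue points. -/
def Balanced (n : ℕ) (c : ℕ → Bool) : Prop :=
  cnt c true (Finset.range (2 * n)) = n ∧ cnt c false (Finset.range (2 * n)) = n

/-- The closed segment between the points number `e.1` and `e.2`. -/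
def seg (p : ℕ → ℝ × ℝ) (e : ℕ × ℕ) : Set (ℝ × ℝ) :=
  segment ℝ (p e.1) (p e.2)

/-- `L` is a line in the plane. -/
def IsLine (L : Set (ℝ × ℝ)) : Prop :=
  ∃ a b : ℝ × ℝ, a ≠ b ∧ L = (affineSpan ℝ ({a, b} : Set (ℝ × ℝ)) : Set (ℝ × ℝ))

/-- The endpoint of the edge `e` selected by `s`. -/
def ep (e : ℕ × ℕ) (s : Bool) : ℕ := if s then e.1 else e.2

/-- `e 0, …, e (K-1)` is a separated matching on the first `m` points:
all `2K` endpoints are pairwise distinct, every edge has an admissible color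
pair (`good` is `(· ≠ ·)` for bichromatic and `(· = ·)` for monochromatic
matchings), the closed segments are pairwise disjoint, and one common line
meets all of them. -/
def SepMatching (m : ℕ) (p : ℕ → ℝ × ℝ) (c : ℕ → Bool) (good : Bool → Bool → Prop)
    (K : ℕ) (e : ℕ → ℕ × ℕ) : Prop :=
  (∀ i, i < K → (e i).1 < m ∧ (e i).2 < m) ∧
  (∀ i, i < K → good (c (e i).1) (c (e i).2)) ∧
  (∀ i j : ℕ, ∀ s t : Bool, i < K → j < K → (i, s) ≠ (j, t) → ep (e i) s ≠ ep (e j) t) ∧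
  (∀ i j, i < K → j < K → i ≠ j → Disjoint (seg p (e i)) (seg p (e j))) ∧
  ∃ L, IsLine L ∧ ∀ i, i < K → (seg p (e i) ∩ L).Nonempty

/-- `q 0, …, q (L-1)` is a non-crossing alternating path on the first `m`
points: pairwise distinct points, consecutive points of different colors, and
the relative interiors (open segments) of any two edges are disjoint. -/
def AltPath (m : ℕ) (p : ℕ → ℝ × ℝ) (c : ℕ → Bool) (L : ℕ) (q : ℕ → ℕ) : Prop :=
  (∀ i, i < L → q i < m) ∧
  (∀ i j, i < L → j < L → q i = q j → i = j) ∧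
  (∀ i, i + 1 < L → c (q i) ≠ c (q (i + 1))) ∧
  (∀ i j, i + 1 < L → j + 1 < L → i ≠ j →
    Disjoint (openSegment ℝ (p (q i)) (p (q (i + 1))))
      (openSegment ℝ (p (q j)) (p (q (j + 1)))))

/-- Starting position of the `i`-th consecutive block with lengths `len`. -/
def blockStart (len : ℕ → ℕ) (i : ℕ) : ℕ := ∑ j ∈ Finset.range i, len j

/-- The `i`-th consecutive block (as a set of indices). -/
def block (len : ℕ → ℕ) (i : ℕ) : Finset ℕ :=
  Finset.Ico (blockStart len i) (blockStart len i + len i)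

/-- The `i`-th consecutive cyclic block modulo `m`, starting at offset `s0`. -/
def cblock (m s0 : ℕ) (len : ℕ → ℕ) (i : ℕ) : Finset ℕ :=
  (Finset.Ico (s0 + blockStart len i) (s0 + blockStart len i + len i)).image (· % m)

/-- A `(k,0)`-partition of the cyclically colored point set `{0, …, 2n-1}`:
starting from the point `0`, greedily take minimal `k`-chunks (consecutive
blocks with exactly `k` points of one color — the chunk's color — fewer than
`k` of the other color, and ending at a point of the chunk's color); the
remaining uncovered points contain fewer than `k` points of each color. -/
structure KZeroPartition (n k : ℕ) (c : ℕ → Bool) where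
  t : ℕ
  len : ℕ → ℕ
  col : ℕ → Bool
  covered : blockStart len t ≤ 2 * n
  exact_maj : ∀ i, i < t → cnt c (col i) (block len i) = k
  lt_min : ∀ i, i < t → cnt c (!(col i)) (block len i) < k
  len_pos : ∀ i, i < t → 0 < len i
  last_col : ∀ i, i < t → c (blockStart len i + len i - 1) = col i
  unc_true : cnt c true (Finset.Ico (blockStart len t) (2 * n)) < k
  unc_false : cnt c false (Finset.Ico (blockStart len t) (2 * n)) < k

namespace KZeroPartition

variable {n k : ℕ} {c : ℕ → Bool}

/-- Number of red chunks. -/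
def nR (Γ : KZeroPartition n k c) : ℕ :=
  ((Finset.range Γ.t).filter fun i => Γ.col i = true).card

/-- Number of blue chunks. -/
def nB (Γ : KZeroPartition n k c) : ℕ :=
  ((Finset.range Γ.t).filter fun i => Γ.col i = false).card

/-- Average index of the chunks of color `b` (`0` if there are none); the
index of a chunk is its number of minority points divided by `k`. -/
def avg (Γ : KZeroPartition n k c) (b : Bool) : ℚ :=
  if ((Finset.range Γ.t).filter fun i => Γ.col i = b).card = 0 then 0
  else (∑ i ∈ (Finset.range Γ.t).filter fun i => Γ.col i = b,
      (cnt c (!b) (block Γ.len i) : ℚ)) /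
    (k * ((Finset.range Γ.t).filter fun i => Γ.col i = b).card)

/-- The index of the partition: the larger of the two average indices. -/
def index (Γ : KZeroPartition n k c) : ℚ := max (Γ.avg true) (Γ.avg false)

end KZeroPartition

/-- A `k`-configuration: a partition of the whole cyclic point set
`{0, …, 2n-1}` into consecutive cyclic `k`-chunks (exactly `k` points of the
chunk's color, fewer than `k` of the other color), with no uncovered points. -/
structure KConfig (n k : ℕ) (c : ℕ → Bool) where
  t : ℕ
  s0 : ℕ
  len : ℕ → ℕ
  col : ℕ → Bool
  covers : blockStart len t = 2 * n
  exact_maj : ∀ i, i < t → cnt c (col i) (cblock (2 * n) s0 len i) = k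
  lt_min : ∀ i, i < t → cnt c (!(col i)) (cblock (2 * n) s0 len i) < k

namespace KConfig

variable {n k : ℕ} {c : ℕ → Bool}

/-- Number of red chunks. -/
def nR (Γ : KConfig n k c) : ℕ :=
  ((Finset.range Γ.t).filter fun i => Γ.col i = true).card

/-- Number of blue chunks. -/
def nB (Γ : KConfig n k c) : ℕ :=
  ((Finset.range Γ.t).filter fun i => Γ.col i = false).card

/-- Number of minority-color points of the `i`-th chunk. -/
def mino (Γ : KConfig n k c) (i : ℕ) : ℕ :=
  cnt c (!(Γ.col i)) (cblock (2 * n) Γ.s0 Γ.len i)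

/-- Average index of the chunks of color `b` (`0` if there are none). -/
def avg (Γ : KConfig n k c) (b : Bool) : ℚ :=
  if ((Finset.range Γ.t).filter fun i => Γ.col i = b).card = 0 then 0
  else (∑ i ∈ (Finset.range Γ.t).filter fun i => Γ.col i = b, (Γ.mino i : ℚ)) /
    (k * ((Finset.range Γ.t).filter fun i => Γ.col i = b).card)

/-- The index of the configuration. -/
def index (Γ : KConfig n k c) : ℚ := max (Γ.avg true) (Γ.avg false)

/-- The max-index color. -/
def maxColor (Γ : KConfig n k c) : Bool :=
  if Γ.avg false ≤ Γ.avg true then true else false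

end KConfig

/-- Number of points of color `b` among the points of the cyclic interval
`[a, x]` (positions taken modulo `m`). -/
def rank (m : ℕ) (c : ℕ → Bool) (b : Bool) (a x : ℕ) : ℕ :=
  cnt c b ((Finset.Ico a (x + 1)).image (· % m))

/-- The middle `(k/3)`-subchunk of the `i`-th chunk of a `k`-configuration:
the (greedy, minimal) second of the three consecutive subchunks containing
exactly `k/3` points of the chunk's color each. -/
def KConfig.midBlock {n k : ℕ} {c : ℕ → Bool} (Γ : KConfig n k c) (i : ℕ) : Finset ℕ :=
  ((Finset.Ico (Γ.s0 + blockStart Γ.len i) (Γ.s0 + blockStart Γ.len i + Γ.len i)).filter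
      fun x =>
        (k / 3 < rank (2 * n) c (Γ.col i) (Γ.s0 + blockStart Γ.len i) x ∨
          (rank (2 * n) c (Γ.col i) (Γ.s0 + blockStart Γ.len i) x = k / 3 ∧
            c (x % (2 * n)) ≠ Γ.col i)) ∧
        (rank (2 * n) c (Γ.col i) (Γ.s0 + blockStart Γ.len i) x < 2 * (k / 3) ∨
          (rank (2 * n) c (Γ.col i) (Γ.s0 + blockStart Γ.len i) x = 2 * (k / 3) ∧
            c (x % (2 * n)) = Γ.col i))).image (· % (2 * n))

/-- Number of runs (maximal constant-color cyclic blocks) of `c` on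
`{0, …, m-1}`, counted as the number of cyclic color changes. -/
def runCount (m : ℕ) (c : ℕ → Bool) : ℕ :=
  ((Finset.range m).filter fun i => c i ≠ c ((i + 1) % m)).card

/-- `a` enumerates `L` cyclically increasing positions of a circular word of
length `m`: strictly increasing and contained in one window of length `m`. -/
def CircSubseq (m L : ℕ) (a : ℕ → ℕ) : Prop :=
  (∀ i j, i < j → j < L → a i < a j) ∧ ∀ i, i < L → a i < a 0 + m

/-- The circular word `w` (of length `m`) has an antipalindromic subsequence
of length `L`. -/
def HasAntipalSubseq (m : ℕ) (w : ℕ → Bool) (L : ℕ) : Prop :=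
  ∃ a : ℕ → ℕ, CircSubseq m L a ∧ ∀ i, i < L → w (a i % m) ≠ w (a (L - 1 - i) % m)

/-- The circular word `w` (of length `m`) has a palindromic subsequence of
length `L`. -/
def HasPalSubseq (m : ℕ) (w : ℕ → Bool) (L : ℕ) : Prop :=
  ∃ a : ℕ → ℕ, CircSubseq m L a ∧ ∀ i, i < L → w (a i % m) = w (a (L - 1 - i) % m)

/-- A set of index pairs forms a separated set of segments among the first `m`
points: pairwise disjoint segments met by a common line. -/
def SepMatchSet (m : ℕ) (p : ℕ → ℝ × ℝ) (S : Set (ℕ × ℕ)) : Prop :=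
  (∀ e ∈ S, e.1 < m ∧ e.2 < m ∧ e.1 ≠ e.2) ∧
  (∀ e ∈ S, ∀ f ∈ S, e ≠ f → Disjoint (seg p e) (seg p f)) ∧
  ∃ L, IsLine L ∧ ∀ e ∈ S, (seg p e ∩ L).Nonempty

lemma cross_cyclic (o a b : ℝ × ℝ) : cross o a b = cross a b o := by
  simp only [cross]; ring

lemma cross_self_left (u v : ℝ × ℝ) : cross u v u = 0 := by
  simp only [cross]; ring

lemma cross_self_right (u v : ℝ × ℝ) : cross u v v = 0 := by
  simp only [cross]; ring

lemma cross_smul_add_smul (u v x y : ℝ × ℝ) {a b : ℝ} (hab : a + b = 1) :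
    cross u v (a • x + b • y) = a * cross u v x + b * cross u v y := by
  obtain rfl : b = 1 - a := by linarith
  simp only [cross, Prod.smul_fst, Prod.smul_snd, Prod.fst_add, Prod.snd_add, smul_eq_mul]
  ring

lemma exists_cross_eq_of_mem_openSegment {u v x y z : ℝ × ℝ} (hz : z ∈ openSegment ℝ x y) :
    ∃ a b : ℝ, 0 < a ∧ 0 < b ∧ cross u v z = a * cross u v x + b * cross u v y := by
  obtain ⟨a, b, ha, hb, hab, rfl⟩ := hz
  exact ⟨a, b, ha, hb, cross_smul_add_smul u v x y hab⟩

lemma cross_eq_zero_of_mem_openSegment {u v z : ℝ × ℝ} (hz : z ∈ openSegment ℝ u v) :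
    cross u v z = 0 := by
  obtain ⟨a, b, -, -, h⟩ := exists_cross_eq_of_mem_openSegment (u := u) (v := v) hz
  rw [h, cross_self_left, cross_self_right]; ring

lemma cross_mul_cross_nonpos_of_mem_segment {u v x y z : ℝ × ℝ} (hz : z ∈ segment ℝ x y)
    (h0 : cross u v z = 0) : cross u v x * cross u v y ≤ 0 := by
  obtain ⟨a, b, ha, hb, hab, rfl⟩ := hz
  rw [cross_smul_add_smul u v x y hab] at h0
  have h : cross u v x * cross u v y = -(a * cross u v x ^ 2 + b * cross u v y ^ 2) := by
    linear_combination (cross u v x + cross u v y) * h0 - cross u v x * cross u v y * hab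
  rw [h, neg_nonpos]
  positivity

lemma cross_eq_zero_of_mem_affineSpan_pair {α β z : ℝ × ℝ} (hz : z ∈ line[ℝ, α, β]) :
    cross α β z = 0 := by
  obtain ⟨r, rfl⟩ := mem_affineSpan_pair_iff_exists_lineMap_eq.mp hz
  simp only [cross, AffineMap.lineMap_apply, vsub_eq_sub, vadd_eq_add, Prod.fst_add,
    Prod.snd_add, Prod.smul_fst, Prod.smul_snd, Prod.fst_sub, Prod.snd_sub, smul_eq_mul]
  ring

lemma cross_eq_zero_of_cross_eq_zero {α β z₁ z₂ z₃ : ℝ × ℝ} (hαβ : α ≠ β)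
    (h₁ : cross α β z₁ = 0) (h₂ : cross α β z₂ = 0) (h₃ : cross α β z₃ = 0) :
    cross z₁ z₂ z₃ = 0 := by
  have hd : (β.1 - α.1) ^ 2 + (β.2 - α.2) ^ 2 ≠ 0 := by
    intro h
    apply hαβ
    ext <;> nlinarith [sq_nonneg (β.1 - α.1), sq_nonneg (β.2 - α.2)]
  simp only [cross] at h₁ h₂ h₃ ⊢
  refine (mul_eq_zero.mp (?_ : ((β.1 - α.1) ^ 2 + (β.2 - α.2) ^ 2) * _ = 0)).resolve_left hd
  linear_combination
    ((β.1 - α.1) * (z₂.1 - z₁.1) + (β.2 - α.2) * (z₂.2 - z₁.2)) * (h₃ - h₁) -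
    ((β.1 - α.1) * (z₃.1 - z₁.1) + (β.2 - α.2) * (z₃.2 - z₁.2)) * (h₂ - h₁)

/-- The diagonals of a convex quadrilateral cross. -/
lemma exists_mem_openSegment_inter {x₁ x₂ x₃ x₄ : ℝ × ℝ}
    (h₁₂₃ : cross x₁ x₂ x₃ < 0) (h₁₂₄ : cross x₁ x₂ x₄ < 0)
    (h₁₃₄ : cross x₁ x₃ x₄ < 0) (h₂₃₄ : cross x₂ x₃ x₄ < 0) :
    ∃ z, z ∈ openSegment ℝ x₁ x₃ ∧ z ∈ openSegment ℝ x₂ x₄ := by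
  -- `t` and `s` are the parameters at which each diagonal meets the line of the other.
  set t := cross x₂ x₄ x₁ / (cross x₂ x₄ x₁ - cross x₂ x₄ x₃)
  set s := cross x₁ x₃ x₂ / (cross x₁ x₃ x₂ - cross x₁ x₃ x₄)
  have c₁ : cross x₂ x₄ x₁ = cross x₁ x₂ x₄ := by simp only [cross]; ring
  have c₃ : cross x₂ x₄ x₃ = -cross x₂ x₃ x₄ := by simp only [cross]; ring
  have c₂ : cross x₁ x₃ x₂ = -cross x₁ x₂ x₃ := by simp only [cross]; ring
  have hd₁ : cross x₂ x₄ x₁ - cross x₂ x₄ x₃ < 0 := by linarith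
  have hd₂ : 0 < cross x₁ x₃ x₂ - cross x₁ x₃ x₄ := by linarith
  have ht₀ : 0 < t := div_pos_of_neg_of_neg (by linarith) hd₁
  have ht₁ : t < 1 := by rw [div_lt_one_of_neg hd₁]; linarith
  have hs₀ : 0 < s := div_pos (by linarith) hd₂
  have hs₁ : s < 1 := by rw [div_lt_one hd₂]; linarith
  refine ⟨(1 - t) • x₁ + t • x₃, ⟨1 - t, t, by linarith, ht₀, by ring, rfl⟩,
    1 - s, s, by linarith, hs₀, by ring, ?_⟩
  have hd₁' := hd₁.ne
  have hd₂' := hd₂.ne'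
  simp only [t, s, cross] at hd₁' hd₂' ⊢
  ext <;> simp only [Prod.fst_add, Prod.snd_add, Prod.smul_fst, Prod.smul_snd, smul_eq_mul] <;>
    field_simp <;> ring

lemma add_mod_eq_or {a d m : ℕ} (hd : d < m) :
    (a + d) % m = a % m + d ∨ (a + d) % m + m = a % m + d := by
  have ha : a % m < m := Nat.mod_lt _ (by omega)
  rw [Nat.add_mod, Nat.mod_eq_of_lt hd]
  by_cases h : a % m + d < m
  · exact Or.inl (Nat.mod_eq_of_lt h)
  · rw [Nat.mod_eq_sub_mod (by omega), Nat.mod_eq_of_lt (by omega)]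
    omega

lemma mod_ne_mod_of_lt_of_lt_add {a b m : ℕ} (hab : a < b) (hba : b < a + m) :
    a % m ≠ b % m := by
  have := add_mod_eq_or (a := a) (show b - a < m by omega)
  rw [Nat.add_sub_cancel' hab.le] at this
  omega

lemma mod_cyclic_of_lt_of_lt_of_lt_add {a b c m : ℕ} (hab : a < b) (hbc : b < c)
    (hca : c < a + m) :
    a % m < b % m ∧ b % m < c % m ∨ b % m < c % m ∧ c % m < a % m ∨
      c % m < a % m ∧ a % m < b % m := by
  have hb := add_mod_eq_or (a := a) (show b - a < m by omega)
  have hc := add_mod_eq_or (a := a) (show c - a < m by omega)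
  rw [Nat.add_sub_cancel' hab.le] at hb
  rw [Nat.add_sub_cancel' (by omega)] at hc
  have := Nat.mod_lt a (show 0 < m by omega)
  have := Nat.mod_lt b (show 0 < m by omega)
  have := Nat.mod_lt c (show 0 < m by omega)
  omega

lemma CircSubseq.apply_zero_le {m L : ℕ} {a : ℕ → ℕ} (ha : CircSubseq m L a) {t : ℕ}
    (ht : t < L) : a 0 ≤ a t := by
  rcases Nat.eq_zero_or_pos t with rfl | h
  · exact le_rfl
  · exact (ha.1 0 t h ht).le

lemma CircSubseq.mod_injOn {m L : ℕ} {a : ℕ → ℕ} (ha : CircSubseq m L a) {i j : ℕ}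
    (hi : i < L) (hj : j < L) (h : a i % m = a j % m) : i = j := by
  have hwin : ∀ t < L, a 0 ≤ a t ∧ a t < a 0 + m := fun t ht => ⟨ha.apply_zero_le ht, ha.2 t ht⟩
  by_contra hne
  rcases Nat.lt_or_gt_of_ne hne with hlt | hlt
  · exact mod_ne_mod_of_lt_of_lt_add (ha.1 i j hlt hj) (by linarith [hwin i hi, hwin j hj]) h
  · exact mod_ne_mod_of_lt_of_lt_add (ha.1 j i hlt hi) (by linarith [hwin i hi, hwin j hj]) h.symm

/-- The chord between positions `c` and `d` does not enter the open arc between positions `a`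
and `b`, and is not the chord between `a` and `b`. -/
def ChordAvoids (a b c d : ℕ) : Prop :=
  (c ≤ min a b ∨ max a b ≤ c) ∧ (d ≤ min a b ∨ max a b ≤ d) ∧
    (c < min a b ∨ max a b < c ∨ d < min a b ∨ max a b < d)

lemma ChordAvoids.symm {a b c d : ℕ} (h : ChordAvoids a b c d) : ChordAvoids b a c d := by
  unfold ChordAvoids at *; omega

namespace ConvexCW

variable {m : ℕ} {p : ℕ → ℝ × ℝ}

lemma cross_neg_of_cyclic (hcw : ConvexCW m p) {a b c : ℕ} (ha : a < m) (hb : b < m)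
    (hc : c < m) (h : a < b ∧ b < c ∨ b < c ∧ c < a ∨ c < a ∧ a < b) :
    cross (p a) (p b) (p c) < 0 := by
  rcases h with ⟨h₁, h₂⟩ | ⟨h₁, h₂⟩ | ⟨h₁, h₂⟩
  · exact hcw a b c h₁ h₂ hc
  · rw [cross_cyclic]; exact hcw b c a h₁ h₂ ha
  · rw [cross_cyclic, cross_cyclic]; exact hcw c a b h₁ h₂ hb

lemma cross_mod_neg (hcw : ConvexCW m p) {a b c : ℕ} (hab : a < b) (hbc : b < c)
    (hca : c < a + m) : cross (p (a % m)) (p (b % m)) (p (c % m)) < 0 :=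
  have hm : 0 < m := by omega
  hcw.cross_neg_of_cyclic (Nat.mod_lt _ hm) (Nat.mod_lt _ hm) (Nat.mod_lt _ hm)
    (mod_cyclic_of_lt_of_lt_of_lt_add hab hbc hca)

lemma comp_circSubseq (hcw : ConvexCW m p) {L : ℕ} {a : ℕ → ℕ} (ha : CircSubseq m L a) :
    ConvexCW L (fun t => p (a t % m)) := by
  intro i j l hij hjl hl
  exact hcw.cross_mod_neg (ha.1 i j hij (by omega)) (ha.1 j l hjl hl)
    (by linarith [ha.2 l hl, ha.apply_zero_le (show i < L by omega)])

lemma exists_mem_openSegment_inter_mod (hcw : ConvexCW m p) {P₁ P₂ P₃ P₄ : ℕ}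
    (h₁₂ : P₁ < P₂) (h₂₃ : P₂ < P₃) (h₃₄ : P₃ < P₄) (h₄₁ : P₄ < P₁ + m) :
    ∃ z, z ∈ openSegment ℝ (p (P₁ % m)) (p (P₃ % m)) ∧
      z ∈ openSegment ℝ (p (P₂ % m)) (p (P₄ % m)) :=
  exists_mem_openSegment_inter (hcw.cross_mod_neg h₁₂ h₂₃ (by omega))
    (hcw.cross_mod_neg h₁₂ (by omega) h₄₁) (hcw.cross_mod_neg (by omega) h₃₄ h₄₁)
    (hcw.cross_mod_neg h₂₃ h₃₄ (by omega))

/-- The crossing point of the diagonals would put three of the points on the line. -/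
lemma not_alternating (hcw : ConvexCW m p) {α β : ℝ × ℝ}
    (hαβ : α ≠ β) {P₁ P₂ P₃ P₄ : ℕ} (h₁₂ : P₁ < P₂) (h₂₃ : P₂ < P₃) (h₃₄ : P₃ < P₄)
    (h₄₁ : P₄ < P₁ + m) (h₁ : 0 ≤ cross α β (p (P₁ % m))) (h₂ : cross α β (p (P₂ % m)) ≤ 0)
    (h₃ : 0 ≤ cross α β (p (P₃ % m))) (h₄ : cross α β (p (P₄ % m)) ≤ 0) : False := by
  obtain ⟨z, hz₁₃, hz₂₄⟩ := hcw.exists_mem_openSegment_inter_mod h₁₂ h₂₃ h₃₄ h₄₁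
  obtain ⟨a, b, ha, hb, hz⟩ := exists_cross_eq_of_mem_openSegment (u := α) (v := β) hz₁₃
  obtain ⟨a', b', ha', hb', hz'⟩ := exists_cross_eq_of_mem_openSegment (u := α) (v := β) hz₂₄
  have hz₀ : cross α β z = 0 := by
    nlinarith [mul_nonneg ha.le h₁, mul_nonneg hb.le h₃, mul_nonpos_of_nonneg_of_nonpos ha'.le h₂,
      mul_nonpos_of_nonneg_of_nonpos hb'.le h₄]
  have e₁ : cross α β (p (P₁ % m)) = 0 := by nlinarith [mul_nonneg hb.le h₃]
  have e₃ : cross α β (p (P₃ % m)) = 0 := by nlinarith [mul_nonneg ha.le h₁]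
  have e₂ : cross α β (p (P₂ % m)) = 0 := by nlinarith [mul_nonpos_of_nonneg_of_nonpos hb'.le h₄]
  exact (hcw.cross_mod_neg h₁₂ h₂₃ (by omega)).ne (cross_eq_zero_of_cross_eq_zero hαβ e₁ e₂ e₃)

lemma cross_nonpos_of_le_or_le (hcw : ConvexCW m p) {a b c : ℕ} (hab : a < b) (hb : b < m)
    (hc : c < m) (h : c ≤ a ∨ b ≤ c) :
    cross (p a) (p b) (p c) ≤ 0 ∧ (c < a ∨ b < c → cross (p a) (p b) (p c) < 0) := by
  rcases lt_trichotomy c a with hca | rfl | hac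
  · have := hcw.cross_neg_of_cyclic (by omega) hb hc (Or.inr (Or.inr ⟨hca, hab⟩))
    exact ⟨this.le, fun _ => this⟩
  · exact ⟨(cross_self_left _ _).le, by omega⟩
  · obtain rfl | hbc := (h.resolve_left (by omega)).eq_or_lt
    · exact ⟨(cross_self_right _ _).le, by omega⟩
    · have := hcw a b c hab hbc hc
      exact ⟨this.le, fun _ => this⟩

lemma disjoint_openSegment (hcw : ConvexCW m p) {a b c d : ℕ} (ha : a < m) (hb : b < m)
    (hc : c < m) (hd : d < m) (hab : a ≠ b) (h : ChordAvoids a b c d) :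
    Disjoint (openSegment ℝ (p a) (p b)) (openSegment ℝ (p c) (p d)) := by
  wlog hlt : a < b generalizing a b
  · rw [openSegment_symm]
    exact this hb ha hab.symm h.symm (by omega)
  obtain ⟨hc', hd', hstrict⟩ := h
  rw [min_eq_left hlt.le, max_eq_right hlt.le] at hc' hd' hstrict
  obtain ⟨hcle, hclt⟩ := hcw.cross_nonpos_of_le_or_le hlt hb hc hc'
  obtain ⟨hdle, hdlt⟩ := hcw.cross_nonpos_of_le_or_le hlt hb hd hd'
  refine Set.disjoint_left.mpr fun z hz₁ hz₂ => ?_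
  obtain ⟨s, t, hs, ht, hz⟩ := exists_cross_eq_of_mem_openSegment (u := p a) (v := p b) hz₂
  rw [cross_eq_zero_of_mem_openSegment hz₁] at hz
  rcases hstrict with h | h | h | h
  · nlinarith [hclt (Or.inl h)]
  · nlinarith [hclt (Or.inr h)]
  · nlinarith [hdlt (Or.inl h)]
  · nlinarith [hdlt (Or.inr h)]

end ConvexCW

/-- Position of the `j`-th vertex of the zigzag path through the pairs `{i, L - 1 - i}` of
positions of a word `w`: it starts each pair at its letter `true`. -/
def zigzag (L : ℕ) (w : ℕ → Bool) (j : ℕ) : ℕ :=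
  if w (j / 2) = decide (j % 2 = 0) then j / 2 else L - 1 - j / 2

lemma zigzag_eq_or (L : ℕ) (w : ℕ → Bool) (j : ℕ) :
    zigzag L w j = j / 2 ∨ zigzag L w j = L - 1 - j / 2 := by
  unfold zigzag; split_ifs <;> simp

lemma zigzag_color {L : ℕ} {w : ℕ → Bool} (hw : ∀ i < L, w i ≠ w (L - 1 - i)) {j : ℕ}
    (hj : j < L) : w (zigzag L w j) = decide (j % 2 = 0) := by
  unfold zigzag
  split_ifs with h
  · exact h
  · have := hw (j / 2) (by omega)
    revert h this; cases w (j / 2) <;> cases w (L - 1 - j / 2) <;> simp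

section Zigzag

variable {K : ℕ} {J : ℕ → ℕ}

lemma chordAvoids_of_zigzag (hJ : ∀ j, J j = j / 2 ∨ J j = 2 * K - 1 - j / 2)
    (hJ' : ∀ j, j + 1 < 2 * K → J j ≠ J (j + 1)) {j l : ℕ} (hjl : j < l) (hl : l + 1 < 2 * K) :
    ChordAvoids (J j) (J (j + 1)) (J l) (J (l + 1)) ∨
      ChordAvoids (J l) (J (l + 1)) (J j) (J (j + 1)) := by
  have := hJ j; have := hJ (j + 1); have := hJ l; have := hJ (l + 1)
  have := hJ' j (by omega); have := hJ' l hl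
  unfold ChordAvoids
  omega

lemma injOn_of_zigzag (hJ : ∀ j, J j = j / 2 ∨ J j = 2 * K - 1 - j / 2)
    (hJ' : ∀ j, j + 1 < 2 * K → J j ≠ J (j + 1)) {j l : ℕ} (hj : j < 2 * K) (hl : l < 2 * K)
    (h : J j = J l) : j = l := by
  wlog hjl : j ≤ l generalizing j l
  · exact (this hl hj h.symm (by omega)).symm
  have := hJ j; have := hJ l
  obtain rfl | hne := eq_or_ne l (j + 1)
  · exact absurd h (hJ' j hl)
  · omega

end Zigzag

theorem altPath_of_hasAntipalSubseq {m K : ℕ} {p : ℕ → ℝ × ℝ} {c : ℕ → Bool}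
    (hcw : ConvexCW m p) (h : HasAntipalSubseq m c (2 * K)) :
    ∃ q : ℕ → ℕ, AltPath m p c (2 * K) q := by
  obtain ⟨a, ha, hanti⟩ := h
  set J := zigzag (2 * K) (fun t => c (a t % m))
  have hcol : ∀ j < 2 * K, c (a (J j) % m) = decide (j % 2 = 0) := fun j hj =>
    zigzag_color hanti hj
  have hJ : ∀ j, J j = j / 2 ∨ J j = 2 * K - 1 - j / 2 := zigzag_eq_or _ _
  have hJ' : ∀ j, j + 1 < 2 * K → J j ≠ J (j + 1) := fun j hj hJj => by
    have h₁ := hcol j (by omega)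
    have h₂ := hcol (j + 1) hj
    rw [hJj, h₂] at h₁
    simp only [decide_eq_decide] at h₁
    omega
  have hJlt : ∀ j < 2 * K, J j < 2 * K := fun j hj => by have := hJ j; omega
  refine ⟨fun j => a (J j) % m, fun j hj => Nat.mod_lt _ ?_, fun j l hj hl h => ?_,
    fun j hj => ?_, fun j l hj hl hjl => ?_⟩
  · linarith [ha.2 0 (by omega)]
  · exact injOn_of_zigzag hJ hJ' hj hl (ha.mod_injOn (hJlt j hj) (hJlt l hl) h)
  · rw [hcol j (by omega), hcol (j + 1) hj]
    simp only [ne_eq, decide_eq_decide]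
    omega
  · have hx := hcw.comp_circSubseq ha
    wlog hlt : j < l generalizing j l
    · exact (this l j hl hj hjl.symm (by omega)).symm
    rcases chordAvoids_of_zigzag hJ hJ' hlt hl with h | h
    · exact hx.disjoint_openSegment (hJlt _ (by omega)) (hJlt _ hj) (hJlt _ (by omega))
        (hJlt _ hl) (hJ' j hj) h
    · exact (hx.disjoint_openSegment (hJlt _ (by omega)) (hJlt _ hl) (hJlt _ (by omega))
        (hJlt _ hj) (hJ' l hl) h).symm

/-- Position of `x < m` in the window `[s, s + m)` that lists the cyclic order of
`{0, …, m - 1}` starting from `s`. -/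
def unwrap (m s x : ℕ) : ℕ := if x < s then x + m else x

section Unwrap

variable {m s x y : ℕ}

lemma unwrap_mod (hx : x < m) : unwrap m s x % m = x := by
  unfold unwrap
  split_ifs
  · rw [Nat.add_mod_right, Nat.mod_eq_of_lt hx]
  · exact Nat.mod_eq_of_lt hx

lemma le_unwrap (hs : s < m) : s ≤ unwrap m s x := by
  unfold unwrap; split_ifs <;> omega

lemma unwrap_lt (hx : x < m) : unwrap m s x < s + m := by
  unfold unwrap; split_ifs <;> omega

lemma unwrap_self : unwrap m s s = s := by
  simp [unwrap]

lemma unwrap_ne_unwrap (hx : x < m) (hy : y < m) (hxy : x ≠ y) : unwrap m s x ≠ unwrap m s y := by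
  unfold unwrap; split_ifs <;> omega

lemma unwrap_lt_unwrap_of_unwrap_le {d : ℕ} (hx : x < m) (hsd : s ≠ d)
    (h : unwrap m d s ≤ unwrap m d x) :
    unwrap m s x < unwrap m s d := by
  unfold unwrap at *; split_ifs at * <;> omega

end Unwrap

lemma ep_swap (e : ℕ × ℕ) (s : Bool) : ep e.swap s = ep e (!s) := by
  cases s <;> rfl

namespace SepMatching

variable {m K : ℕ} {p : ℕ → ℝ × ℝ} {c : ℕ → Bool} {good : Bool → Bool → Prop}
  {e : ℕ → ℕ × ℕ}

lemma fst_ne_snd (hM : SepMatching m p c good K e) {i j : ℕ} (hi : i < K) (hj : j < K) :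
    (e i).1 ≠ (e j).2 :=
  hM.2.2.1 i j true false hi hj (by simp)

lemma fst_ne_fst (hM : SepMatching m p c good K e) {i j : ℕ} (hi : i < K) (hj : j < K)
    (hij : i ≠ j) : (e i).1 ≠ (e j).1 :=
  hM.2.2.1 i j true true hi hj (by simp [hij])

lemma snd_ne_snd (hM : SepMatching m p c good K e) {i j : ℕ} (hi : i < K) (hj : j < K)
    (hij : i ≠ j) : (e i).2 ≠ (e j).2 :=
  hM.2.2.1 i j false false hi hj (by simp [hij])

lemma reorient (hgood : ∀ a b, good a b → good b a) (hM : SepMatching m p c good K e)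
    (f : ℕ → Bool) : SepMatching m p c good K (fun i => if f i then (e i).swap else e i) := by
  obtain ⟨hbd, hgd, hdist, hdisj, L, hL, hmeet⟩ := hM
  have hep : ∀ i s, ep (if f i then (e i).swap else e i) s = ep (e i) (xor (f i) s) := by
    intro i s; cases f i <;> simp [ep_swap]
  have hseg : ∀ i, seg p (if f i then (e i).swap else e i) = seg p (e i) := by
    intro i; split_ifs <;> simp [seg, segment_symm]
  refine ⟨fun i hi => ?_, fun i hi => ?_, fun i j s t hi hj hne => ?_,
    fun i j hi hj hne => ?_, L, hL, fun i hi => ?_⟩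
  · dsimp only; split_ifs <;> simp [hbd i hi]
  · dsimp only; split_ifs
    · exact hgood _ _ (hgd i hi)
    · exact hgd i hi
  · rw [hep, hep]
    refine hdist i j _ _ hi hj fun h => hne ?_
    simp only [Prod.mk.injEq] at h ⊢
    obtain ⟨rfl, h⟩ := h
    exact ⟨rfl, by simpa using h⟩
  · rw [hseg, hseg]; exact hdisj i j hi hj hne
  · rw [hseg]; exact hmeet i hi

lemma exists_oriented (hgood : ∀ a b, good a b → good b a) (hM : SepMatching m p c good K e) :
    ∃ α β : ℝ × ℝ, α ≠ β ∧ ∃ e' : ℕ → ℕ × ℕ, SepMatching m p c good K e' ∧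
      ∀ i < K, 0 ≤ cross α β (p (e' i).1) ∧ cross α β (p (e' i).2) ≤ 0 := by
  obtain ⟨-, -, -, -, L, ⟨α, β, hαβ, rfl⟩, hmeet⟩ := id hM
  refine ⟨α, β, hαβ, _, hM.reorient hgood fun i =>
    !decide (0 ≤ cross α β (p (e i).1) ∧ cross α β (p (e i).2) ≤ 0), fun i hi => ?_⟩
  obtain ⟨z, hzseg, hzL⟩ := hmeet i hi
  have hprod := cross_mul_cross_nonpos_of_mem_segment hzseg
    (cross_eq_zero_of_mem_affineSpan_pair hzL)
  by_cases h : 0 ≤ cross α β (p (e i).1) ∧ cross α β (p (e i).2) ≤ 0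
  · simp [h]
  · simp only [h, decide_false, Bool.not_false, if_true, Prod.fst_swap, Prod.snd_swap]
    rcases le_or_gt 0 (cross α β (p (e i).1)) with h₁ | h₁
    · have h₂ : 0 < cross α β (p (e i).2) := lt_of_not_ge fun h₂ => h ⟨h₁, h₂⟩
      exact ⟨h₂.le, by nlinarith⟩
    · exact ⟨by nlinarith, h₁.le⟩

theorem exists_unwrap_fst_lt_unwrap_snd (hcw : ConvexCW m p) (hM : SepMatching m p c good K e)
    {α β : ℝ × ℝ} (hαβ : α ≠ β)
    (hside : ∀ i < K, 0 ≤ cross α β (p (e i).1) ∧ cross α β (p (e i).2) ≤ 0) (hK : 0 < K) :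
    ∃ i₀ < K, ∀ i < K, ∀ j < K, unwrap m (e i₀).1 (e i).1 < unwrap m (e i₀).1 (e j).2 := by
  -- the arc starts at the first endpoint that follows `(e 0).2` in the cyclic order
  obtain ⟨i₀, hi₀, hmin⟩ := (Finset.range K).exists_min_image (fun i => unwrap m (e 0).2 (e i).1)
    ⟨0, Finset.mem_range.mpr hK⟩
  rw [Finset.mem_range] at hi₀
  refine ⟨i₀, hi₀, fun i hi j hj => lt_of_not_ge fun hle => ?_⟩
  have hs : (e i₀).1 < m := (hM.1 i₀ hi₀).1
  have h₁₂ : (e i₀).1 < unwrap m (e i₀).1 (e j).2 := (le_unwrap hs).lt_of_ne <| by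
    simpa only [unwrap_self] using
      unwrap_ne_unwrap (s := (e i₀).1) hs (hM.1 j hj).2 (hM.fst_ne_snd hi₀ hj)
  have h₂₃ :=
    hle.lt_of_ne (unwrap_ne_unwrap (hM.1 j hj).2 (hM.1 i hi).1 (hM.fst_ne_snd hi hj).symm)
  have h₃₄ := unwrap_lt_unwrap_of_unwrap_le (hM.1 i hi).1 (hM.fst_ne_snd hi₀ hK)
    (hmin i (Finset.mem_range.mpr hi))
  refine hcw.not_alternating hαβ h₁₂ h₂₃ h₃₄ (unwrap_lt (hM.1 0 hK).2) ?_ ?_ ?_ ?_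
  · rw [Nat.mod_eq_of_lt hs]; exact (hside i₀ hi₀).1
  · rw [unwrap_mod (hM.1 j hj).2]; exact (hside j hj).2
  · rw [unwrap_mod (hM.1 i hi).1]; exact (hside i hi).1
  · rw [unwrap_mod (hM.1 0 hK).2]; exact (hside 0 hK).2

theorem unwrap_snd_lt_of_unwrap_fst_lt (hcw : ConvexCW m p) (hM : SepMatching m p c good K e)
    {s : ℕ} (hs : s < m) (harc : ∀ i < K, ∀ j < K, unwrap m s (e i).1 < unwrap m s (e j).2)
    {i j : ℕ} (hi : i < K) (hj : j < K) (h : unwrap m s (e i).1 < unwrap m s (e j).1) :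
    unwrap m s (e j).2 < unwrap m s (e i).2 := by
  have hij : i ≠ j := by rintro rfl; exact lt_irrefl _ h
  refine lt_of_le_of_ne (le_of_not_gt fun h' => ?_)
    (unwrap_ne_unwrap (hM.1 j hj).2 (hM.1 i hi).2 (hM.snd_ne_snd hj hi hij.symm))
  obtain ⟨z, hz₁, hz₂⟩ := hcw.exists_mem_openSegment_inter_mod h (harc j hj i hi) h'
    (by linarith [unwrap_lt (s := s) (hM.1 j hj).2, le_unwrap (x := (e i).1) hs])
  rw [unwrap_mod (hM.1 i hi).1, unwrap_mod (hM.1 i hi).2] at hz₁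
  rw [unwrap_mod (hM.1 j hj).1, unwrap_mod (hM.1 j hj).2] at hz₂
  exact Set.disjoint_left.mp (hM.2.2.2.1 i j hi hj hij) (openSegment_subset_segment _ _ _ hz₁)
    (openSegment_subset_segment _ _ _ hz₂)

end SepMatching

lemma exists_strictMono_enum {α : Type*} [LinearOrder α] {g : ℕ → α} {K : ℕ}
    (hg : Set.InjOn g (Set.Iio K)) :
    ∃ σ : ℕ → ℕ, (∀ j < K, σ j < K) ∧ ∀ j₁ j₂, j₁ < j₂ → j₂ < K → g (σ j₁) < g (σ j₂) := by
  set τ := Tuple.sort fun i : Fin K => g i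
  refine ⟨fun j => if h : j < K then τ ⟨j, h⟩ else 0, fun j hj => by simp [hj],
    fun j₁ j₂ h₁₂ h₂ => ?_⟩
  have h₁ : j₁ < K := h₁₂.trans h₂
  simp only [dif_pos h₁, dif_pos h₂]
  refine (Tuple.monotone_sort (fun i : Fin K => g i)
    (show (⟨j₁, h₁⟩ : Fin K) ≤ ⟨j₂, h₂⟩ from h₁₂.le)).lt_of_ne fun heq => h₁₂.ne ?_
  have := τ.injective (Fin.ext (hg (τ ⟨j₁, h₁⟩).isLt (τ ⟨j₂, h₂⟩).isLt heq))
  simpa using this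

theorem hasAntipalSubseq_of_nested {m K s : ℕ} {w : ℕ → Bool} {f g : ℕ → ℕ}
    (hf : Set.InjOn f (Set.Iio K)) (hfg : ∀ i < K, ∀ j < K, f i < g j)
    (hnest : ∀ i < K, ∀ j < K, f i < f j → g j < g i)
    (hwin : ∀ i < K, s ≤ f i ∧ g i < s + m) (hw : ∀ i < K, w (f i % m) ≠ w (g i % m)) :
    HasAntipalSubseq m w (2 * K) := by
  obtain ⟨σ, hσ, hmono⟩ := exists_strictMono_enum hf
  refine ⟨fun j => if j < K then f (σ j) else g (σ (2 * K - 1 - j)),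
    ⟨fun j₁ j₂ h₁₂ h₂ => ?_, fun j hj => ?_⟩, fun j hj => ?_⟩
  · dsimp only
    split_ifs with h₁ h₂'
    · exact hmono _ _ h₁₂ h₂'
    · exact hfg _ (hσ _ h₁) _ (hσ _ (by omega))
    · omega
    · exact hnest _ (hσ _ (by omega)) _ (hσ _ (by omega)) (hmono _ _ (by omega) (by omega))
  · have hK : 0 < K := by omega
    have h₀ := (hwin _ (hσ 0 hK)).1
    dsimp only
    rw [if_pos hK]
    split_ifs with h₁
    · linarith [hfg _ (hσ j h₁) _ (hσ j h₁), (hwin _ (hσ j h₁)).2]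
    · linarith [(hwin _ (hσ (2 * K - 1 - j) (by omega))).2]
  · dsimp only
    split_ifs with h₁ h₂
    · omega
    · rw [show 2 * K - 1 - (2 * K - 1 - j) = j by omega]
      exact hw _ (hσ j h₁)
    · exact (hw _ (hσ _ (by omega))).symm
    · omega

theorem hasAntipalSubseq_of_sepMatching {m K : ℕ} {p : ℕ → ℝ × ℝ} {c : ℕ → Bool}
    {e : ℕ → ℕ × ℕ} (hcw : ConvexCW m p) (hM : SepMatching m p c (· ≠ ·) K e) :
    HasAntipalSubseq m c (2 * K) := by
  obtain ⟨α, β, hαβ, e, hM, hside⟩ := hM.exists_oriented fun _ _ h => h.symm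
  rcases Nat.eq_zero_or_pos K with rfl | hK
  · exact ⟨id, ⟨fun _ _ _ h => by omega, fun _ h => by omega⟩, fun _ h => by omega⟩
  obtain ⟨i₀, hi₀, harc⟩ := hM.exists_unwrap_fst_lt_unwrap_snd hcw hαβ hside hK
  have hs : (e i₀).1 < m := (hM.1 i₀ hi₀).1
  refine hasAntipalSubseq_of_nested (s := (e i₀).1) (f := fun i => unwrap m (e i₀).1 (e i).1)
    (fun i hi j hj h => ?_) harc
    (fun i hi j hj => hM.unwrap_snd_lt_of_unwrap_fst_lt hcw hs harc hi hj)
    (fun i hi => ⟨le_unwrap hs, unwrap_lt (hM.1 i hi).2⟩) fun i hi => ?_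
  · by_contra hij
    exact unwrap_ne_unwrap (hM.1 i hi).1 (hM.1 j hj).1 (hM.fst_ne_fst hi hj hij) h
  · rw [unwrap_mod (hM.1 i hi).1, unwrap_mod (hM.1 i hi).2]
    exact hM.2.1 i hi

theorem matching_to_alternating_path_general
    (n K : ℕ) (p : ℕ → ℝ × ℝ) (c : ℕ → Bool)
    (hcw : ConvexCW (2 * n) p)
    (e : ℕ → ℕ × ℕ) (hM : SepMatching (2 * n) p c (· ≠ ·) K e) :
    ∃ q : ℕ → ℕ, AltPath (2 * n) p c (2 * K) q :=
  altPath_of_hasAntipalSubseq hcw (hasAntipalSubseq_of_sepMatching hcw hM)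

/-- a separated bichromatic matching with `K` segments yields a
non-crossing alternating path of length `2K`. -/
theorem matching_to_alternating_path
    (n K : ℕ) (p : ℕ → ℝ × ℝ) (c : ℕ → Bool)
    (hcw : ConvexCW (2 * n) p) (hbal : Balanced n c)
    (e : ℕ → ℕ × ℕ) (hM : SepMatching (2 * n) p c (· ≠ ·) K e) :
    ∃ q : ℕ → ℕ, AltPath (2 * n) p c (2 * K) q :=
  matching_to_alternating_path_general n K p c hcw e hM

end SepMatchPaper
end

section
/- Let \Gamma be a (k,0)-partition of a convex set of n red and n blue points with R red chunks, B blue chunks, and index \alpha (the maximum of the average red index over red chunks and the average blue index over blue chunks). Then R + B >= floor(2n/(2k-1)) >= n/k - 1, max{R,B} > n/(2k) - 1/2, and min{R,B} >= ((1-\alpha)/2) floor(2n/(2k-1)) - (k-1)/k > (1-\alpha) n/(2k) - 2. -/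
open scoped BigOperators

namespace SepMatchPaper

/-!
A chunk has exactly `k` points of its color and fewer than `k` of the other, so at most `2k - 1`
points, and at most `2k - 2` points stay uncovered; hence `2n < (2k - 1)(R + B + 1)`, which gives
the bounds on `R + B` and on `max R B ≥ (R + B) / 2`. For the minimum fix a color with `m`
chunks, the other color having `M`. The `n` points of the first color lie in its own chunks (`k`
each), among the minority points of the other `M` chunks (at most `α k M` of them) or among the
at most `k - 1` uncovered points, while `k M ≤ n`; so `(1 - α) k M ≤ k m + k - 1`, and
`m + M ≥ ⌊2n / (2k - 1)⌋` finishes.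
-/

lemma cnt_Ico_add (c : ℕ → Bool) (x : Bool) {a b d : ℕ} (hab : a ≤ b) (hbd : b ≤ d) :
    cnt c x (Finset.Ico a d) = cnt c x (Finset.Ico a b) + cnt c x (Finset.Ico b d) := by
  unfold cnt
  rw [← Finset.Ico_union_Ico_eq_Ico hab hbd, Finset.filter_union,
    Finset.card_union_of_disjoint
      (Finset.disjoint_filter_filter (Finset.Ico_disjoint_Ico_consecutive a b d))]

lemma cnt_add_cnt_not (c : ℕ → Bool) (b : Bool) (S : Finset ℕ) :
    cnt c b S + cnt c (!b) S = S.card := by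
  unfold cnt
  have : S.filter (fun x => c x = !b) = S.filter fun x => ¬c x = b :=
    Finset.filter_congr fun x _ => by cases c x <;> cases b <;> simp
  rw [this, Finset.card_filter_add_card_filter_not]

lemma blockStart_succ (len : ℕ → ℕ) (i : ℕ) :
    blockStart len (i + 1) = blockStart len i + len i :=
  Finset.sum_range_succ len i

lemma cnt_Ico_blockStart (c : ℕ → Bool) (x : Bool) (len : ℕ → ℕ) (t : ℕ) :
    cnt c x (Finset.Ico 0 (blockStart len t)) =
      ∑ i ∈ Finset.range t, cnt c x (block len i) := by
  induction t with
  | zero => rfl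
  | succ t ih =>
    rw [blockStart_succ, Finset.sum_range_succ, ← ih,
      cnt_Ico_add c x (Nat.zero_le _) (Nat.le_add_right _ _)]
    rfl

lemma lt_mul_div_two_mul_sub_one_add_one (n : ℕ) {k : ℕ} (hk : 0 < k) :
    n < k * (2 * n / (2 * k - 1) + 1) := by
  have h := Nat.lt_mul_div_succ (2 * n) (show 0 < 2 * k - 1 by omega)
  have : (2 * k - 1) * (2 * n / (2 * k - 1) + 1) ≤ 2 * k * (2 * n / (2 * k - 1) + 1) :=
    Nat.mul_le_mul_right _ (Nat.sub_le _ _)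
  linarith

lemma div_sub_one_lt_of_lt_mul_add_one {n k q : ℕ} (hk : 0 < k) (h : n < k * (q + 1)) :
    (n : ℚ) / k - 1 < q := by
  have hkq : (0 : ℚ) < k := by exact_mod_cast hk
  have h' : (n : ℚ) < k * (q + 1) := by exact_mod_cast h
  rw [sub_lt_iff_lt_add, div_lt_iff₀ hkq]
  linarith

namespace KZeroPartition

variable {n k : ℕ} {c : ℕ → Bool} (Γ : KZeroPartition n k c)

lemma k_pos (Γ : KZeroPartition n k c) : 0 < k := by
  have := Γ.unc_true
  omega

def chunks (b : Bool) : Finset ℕ :=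
  (Finset.range Γ.t).filter fun i => Γ.col i = b

def minoSum (b : Bool) : ℕ :=
  ∑ i ∈ Γ.chunks b, cnt c (!b) (block Γ.len i)

lemma filter_col_ne_eq_chunks_not (b : Bool) :
    (Finset.range Γ.t).filter (fun i => ¬Γ.col i = b) = Γ.chunks (!b) := by
  refine Finset.filter_congr fun i _ => ?_
  cases Γ.col i <;> cases b <;> simp

lemma card_chunks_add_card_chunks_not (b : Bool) :
    (Γ.chunks b).card + (Γ.chunks (!b)).card = Γ.t := by
  rw [← Γ.filter_col_ne_eq_chunks_not, chunks, Finset.card_filter_add_card_filter_not,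
    Finset.card_range]

lemma nR_add_nB : Γ.nR + Γ.nB = Γ.t :=
  Γ.card_chunks_add_card_chunks_not true

lemma len_add_one_le {i : ℕ} (hi : i < Γ.t) : Γ.len i + 1 ≤ 2 * k := by
  have hcard := cnt_add_cnt_not c (Γ.col i) (block Γ.len i)
  have hmin := Γ.lt_min i hi
  rw [Γ.exact_maj i hi, block, Nat.card_Ico] at hcard
  rw [block] at hmin
  omega

lemma blockStart_add_t_le : blockStart Γ.len Γ.t + Γ.t ≤ 2 * k * Γ.t := by
  calc blockStart Γ.len Γ.t + Γ.t = ∑ i ∈ Finset.range Γ.t, (Γ.len i + 1) := by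
        simp [blockStart, Finset.sum_add_distrib]
    _ ≤ ∑ _i ∈ Finset.range Γ.t, 2 * k :=
        Finset.sum_le_sum fun i hi => Γ.len_add_one_le (Finset.mem_range.mp hi)
    _ = 2 * k * Γ.t := by simp [mul_comm]

lemma two_mul_add_two_le_blockStart_add : 2 * n + 2 ≤ blockStart Γ.len Γ.t + 2 * k := by
  have hcard := cnt_add_cnt_not c true (Finset.Ico (blockStart Γ.len Γ.t) (2 * n))
  have := Γ.unc_true
  have := Γ.unc_false
  have := Γ.covered
  rw [Nat.card_Ico] at hcard
  simp only [Bool.not_true] at hcard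
  omega

lemma two_mul_lt : 2 * n < (2 * k - 1) * (Γ.t + 1) := by
  have h1 := Γ.blockStart_add_t_le
  have h2 := Γ.two_mul_add_two_le_blockStart_add
  have hk := Γ.k_pos
  have : (2 * k - 1) * (Γ.t + 1) + Γ.t + 1 = 2 * k * Γ.t + 2 * k := by
    zify [show 1 ≤ 2 * k by omega]
    ring
  omega

lemma two_mul_div_le_t : 2 * n / (2 * k - 1) ≤ Γ.t := by
  have hk := Γ.k_pos
  refine Nat.lt_add_one_iff.mp ((Nat.div_lt_iff_lt_mul (by omega)).mpr ?_)
  rw [mul_comm _ (2 * k - 1)]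
  exact Γ.two_mul_lt

lemma sum_cnt_block (b : Bool) :
    ∑ i ∈ Finset.range Γ.t, cnt c b (block Γ.len i) =
      (Γ.chunks b).card * k + Γ.minoSum (!b) := by
  rw [← Finset.sum_filter_add_sum_filter_not _ (fun i => Γ.col i = b),
    Γ.filter_col_ne_eq_chunks_not, minoSum, Bool.not_not]
  congr 1
  rw [chunks, Finset.sum_congr rfl fun i hi => ?_, Finset.sum_const, smul_eq_mul]
  obtain ⟨hit, rfl⟩ := Finset.mem_filter.mp hi
  exact Γ.exact_maj i (Finset.mem_range.mp hit)

lemma count_eq (hbal : Balanced n c) (b : Bool) :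
    n = (Γ.chunks b).card * k + Γ.minoSum (!b)
      + cnt c b (Finset.Ico (blockStart Γ.len Γ.t) (2 * n)) := by
  have hb : cnt c b (Finset.range (2 * n)) = n := by
    cases b
    exacts [hbal.2, hbal.1]
  rw [Finset.range_eq_Ico, cnt_Ico_add c b (Nat.zero_le _) Γ.covered, cnt_Ico_blockStart,
    Γ.sum_cnt_block b] at hb
  omega

lemma minoSum_le_mul_card (b : Bool) : Γ.minoSum b ≤ k * (Γ.chunks b).card := by
  rw [mul_comm, ← smul_eq_mul]
  refine Finset.sum_le_card_nsmul _ _ k fun i hi => ?_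
  obtain ⟨hit, rfl⟩ := Finset.mem_filter.mp hi
  exact (Γ.lt_min i (Finset.mem_range.mp hit)).le

lemma avg_eq (b : Bool) : Γ.avg b =
    if (Γ.chunks b).card = 0 then 0 else (Γ.minoSum b : ℚ) / (k * (Γ.chunks b).card) := by
  rw [minoSum, Nat.cast_sum]
  rfl

lemma avg_mul_eq (b : Bool) : Γ.avg b * (k * (Γ.chunks b).card) = Γ.minoSum b := by
  rw [avg_eq]
  split_ifs with h
  · simp [minoSum, Finset.card_eq_zero.mp h]
  · have := Γ.k_pos
    rw [div_mul_cancel₀]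
    positivity

lemma avg_nonneg (b : Bool) : 0 ≤ Γ.avg b := by
  rw [avg_eq]
  split_ifs <;> positivity

lemma avg_le_one (b : Bool) : Γ.avg b ≤ 1 := by
  rcases Nat.eq_zero_or_pos (Γ.chunks b).card with h | h
  · simp [avg_eq, h]
  · have hpos : (0 : ℚ) < k * (Γ.chunks b).card := by
      have := Γ.k_pos
      positivity
    rw [← mul_le_mul_iff_left₀ hpos, avg_mul_eq, one_mul]
    exact_mod_cast Γ.minoSum_le_mul_card b

lemma index_nonneg : 0 ≤ Γ.index :=
  (Γ.avg_nonneg true).trans (le_max_left _ _)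

lemma index_le_one : Γ.index ≤ 1 :=
  max_le (Γ.avg_le_one true) (Γ.avg_le_one false)

lemma minoSum_le_index_mul (b : Bool) :
    (Γ.minoSum b : ℚ) ≤ Γ.index * (k * (Γ.chunks b).card) := by
  rw [← Γ.avg_mul_eq]
  have hb : Γ.avg b ≤ Γ.index := by
    cases b
    exacts [le_max_right _ _, le_max_left _ _]
  exact mul_le_mul_of_nonneg_right hb (by positivity)

lemma one_sub_index_mul_card_chunks_not_le (hbal : Balanced n c) (b : Bool) :
    (1 - Γ.index) * (k * (Γ.chunks (!b)).card) ≤ k * (Γ.chunks b).card + (k - 1) := by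
  have hb := Γ.count_eq hbal b
  have hnb := Γ.count_eq hbal (!b)
  have hunc : cnt c b (Finset.Ico (blockStart Γ.len Γ.t) (2 * n)) + 1 ≤ k := by
    cases b
    exacts [Γ.unc_false, Γ.unc_true]
  have hn : n + 1 ≤ k * (Γ.chunks b).card + Γ.minoSum (!b) + k := by linarith
  have hM : k * (Γ.chunks (!b)).card ≤ n := by linarith
  have hn' : (n : ℚ) + 1 ≤ k * (Γ.chunks b).card + Γ.minoSum (!b) + k := by exact_mod_cast hn
  have hM' : (k : ℚ) * (Γ.chunks (!b)).card ≤ n := by exact_mod_cast hM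
  linarith [Γ.minoSum_le_index_mul (!b)]

lemma le_card_chunks (hbal : Balanced n c) (b : Bool) :
    (1 - Γ.index) / 2 * ((2 * n / (2 * k - 1) : ℕ) : ℚ) - ((k : ℚ) - 1) / k
      ≤ (Γ.chunks b).card := by
  have hk : (0 : ℚ) < k := by exact_mod_cast Γ.k_pos
  have hk1 : (1 : ℚ) ≤ k := by exact_mod_cast Γ.k_pos
  have hF : ((2 * n / (2 * k - 1) : ℕ) : ℚ) ≤ (Γ.chunks b).card + (Γ.chunks (!b)).card := by
    exact_mod_cast
      Γ.two_mul_div_le_t.trans (Γ.card_chunks_add_card_chunks_not b).ge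
  have hM := Γ.one_sub_index_mul_card_chunks_not_le hbal b
  have hα := Γ.index_le_one
  have hα0 := Γ.index_nonneg
  have key : (1 - Γ.index) / 2 * ((Γ.chunks b).card + (Γ.chunks (!b)).card) * k
      ≤ ((Γ.chunks b).card + ((k : ℚ) - 1) / k) * k := by
    rw [add_mul _ (((k : ℚ) - 1) / k), div_mul_cancel₀ _ hk.ne']
    linarith [mul_nonneg hα0 (mul_nonneg hk.le (Nat.cast_nonneg (Γ.chunks b).card))]
  have hF' := mul_le_mul_of_nonneg_left hF (by linarith : 0 ≤ (1 - Γ.index) / 2)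
  linarith [le_of_mul_le_mul_right key hk]

lemma lt_card_chunks (hbal : Balanced n c) (b : Bool) :
    (1 - Γ.index) * n / (2 * k) - 2 < (Γ.chunks b).card := by
  have hk : (0 : ℚ) < k := by exact_mod_cast Γ.k_pos
  have hn := div_sub_one_lt_of_lt_mul_add_one Γ.k_pos
    (lt_mul_div_two_mul_sub_one_add_one n Γ.k_pos)
  have hk1 : ((k : ℚ) - 1) / k < 1 := by
    rw [div_lt_one hk]
    linarith
  have hα := Γ.index_le_one
  have hα0 := Γ.index_nonneg
  have hsplit : (1 - Γ.index) * n / (2 * k) = (1 - Γ.index) / 2 * (n / k) := by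
    field_simp
  have hmono := mul_le_mul_of_nonneg_left hn.le (by linarith : 0 ≤ (1 - Γ.index) / 2)
  rw [hsplit]
  linarith [Γ.le_card_chunks hbal b]

end KZeroPartition

/-- lower bounds on the numbers of chunks of a `(k,0)`-partition
in terms of its index `α`. -/
theorem kzero_partition_counts
    (n k : ℕ) (c : ℕ → Bool) (hbal : Balanced n c) (Γ : KZeroPartition n k c) :
    ((2 * n) / (2 * k - 1) ≤ Γ.nR + Γ.nB) ∧
    ((n : ℚ) / k - 1 ≤ (((2 * n) / (2 * k - 1) : ℕ) : ℚ)) ∧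
    ((n : ℚ) / (2 * k) - 1 / 2 < (max Γ.nR Γ.nB : ℚ)) ∧
    ((1 - Γ.index) / 2 * (((2 * n) / (2 * k - 1) : ℕ) : ℚ) - ((k : ℚ) - 1) / k
        ≤ (min Γ.nR Γ.nB : ℚ)) ∧
    ((1 - Γ.index) * n / (2 * k) - 2 < (min Γ.nR Γ.nB : ℚ)) := by
  have hk := Γ.k_pos
  have hn := lt_mul_div_two_mul_sub_one_add_one n hk
  refine ⟨Γ.nR_add_nB ▸ Γ.two_mul_div_le_t, (div_sub_one_lt_of_lt_mul_add_one hk hn).le, ?_,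
    le_min (Γ.le_card_chunks hbal true) (Γ.le_card_chunks hbal false),
    lt_min (Γ.lt_card_chunks hbal true) (Γ.lt_card_chunks hbal false)⟩
  have ht : (n : ℚ) / k - 1 < Γ.t :=
    div_sub_one_lt_of_lt_mul_add_one hk (hn.trans_le (by gcongr; exact Γ.two_mul_div_le_t))
  have hmax : (Γ.t : ℚ) ≤ 2 * max (Γ.nR : ℚ) Γ.nB := by
    rw [← Γ.nR_add_nB, Nat.cast_add]
    linarith [le_max_left (Γ.nR : ℚ) Γ.nB, le_max_right (Γ.nR : ℚ) Γ.nB]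
  have hsplit : (n : ℚ) / (2 * k) - 1 / 2 = ((n : ℚ) / k - 1) / 2 := by
    field_simp
  linarith

end SepMatchPaper
end

section
/- Let \Gamma be a k-configuration of a convex point set P with n red and n blue points. If a chunk matching M is chosen uniformly at random among the \ell chunk matchings M_0,...,M_{\ell-1} (where \ell is the number of chunks and M_i pairs chunk C_j with C_{(i-j) mod \ell}), then the expected number of edges of the derived separated bichromatic matching is at least n/2. -/
open scoped BigOperators

namespace SepMatchPaper

lemma sum_sum_Ico_blockStart {M : Type*} [AddCommMonoid M] (q : ℕ → M) (s0 t : ℕ)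
    (len : ℕ → ℕ) :
    ∑ i ∈ Finset.range t,
        ∑ x ∈ Finset.Ico (s0 + blockStart len i) (s0 + blockStart len i + len i), q x =
      ∑ x ∈ Finset.Ico s0 (s0 + blockStart len t), q x := by
  induction t with
  | zero => simp [blockStart]
  | succ t ih =>
    rw [Finset.sum_range_succ, ih, blockStart_succ, ← add_assoc]
    exact Finset.sum_Ico_consecutive q (Nat.le_add_right _ _) (Nat.le_add_right _ _)

lemma cnt_image_mod {c : ℕ → Bool} {b : Bool} {S : Finset ℕ} {a m : ℕ}
    (hS : S ⊆ Finset.Ico a (a + m)) :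
    cnt c b (S.image (· % m)) = ∑ x ∈ S, if c (x % m) = b then 1 else 0 := by
  unfold cnt
  rw [Finset.filter_image, Finset.card_image_of_injOn, Finset.card_filter]
  exact (Nat.mod_injOn_Ico a m).mono (Finset.coe_subset.2 ((Finset.filter_subset _ S).trans hS))

lemma sum_cnt_cblock (c : ℕ → Bool) (b : Bool) {m t : ℕ} (s0 : ℕ) {len : ℕ → ℕ}
    (hcover : blockStart len t = m) :
    ∑ i ∈ Finset.range t, cnt c b (cblock m s0 len i) = cnt c b (Finset.range m) := by
  have hblock : ∀ i ∈ Finset.range t,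
      Finset.Ico (s0 + blockStart len i) (s0 + blockStart len i + len i) ⊆
        Finset.Ico s0 (s0 + m) := by
    intro i hi
    have := Finset.sum_le_sum_of_subset (f := len)
      (Finset.range_subset_range.2 (Finset.mem_range.1 hi))
    rw [← blockStart, ← blockStart, blockStart_succ, hcover] at this
    exact Finset.Ico_subset_Ico (by omega) (by omega)
  rw [← Nat.image_Ico_mod s0 m, cnt_image_mod le_rfl, ← hcover, ← sum_sum_Ico_blockStart]
  exact Finset.sum_congr rfl fun i hi => cnt_image_mod (hcover ▸ hblock i hi)

lemma sum_range_sub_mod {M : Type*} [AddCommMonoid M] (F : ℕ → M) {t j : ℕ} (hj : j < t) :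
    ∑ i ∈ Finset.range t, F ((i + t - j) % t) = ∑ i ∈ Finset.range t, F i := by
  have : NeZero t := ⟨by omega⟩
  rw [Finset.sum_range, Finset.sum_range]
  refine Fintype.sum_equiv (Equiv.subRight ⟨j, hj⟩) _ _ fun i => ?_
  rw [Equiv.subRight_apply, Fin.val_sub, Nat.add_sub_assoc hj.le, Nat.add_comm]

lemma sum_sum_le_of_add_swap_le {ι M : Type*} [AddCommMonoid M] [LinearOrder M]
    [IsOrderedCancelAddMonoid M] (s : Finset ι) {f g : ι → ι → M}
    (h : ∀ i ∈ s, ∀ j ∈ s, g i j + g j i ≤ f i j + f j i) :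
    ∑ i ∈ s, ∑ j ∈ s, g i j ≤ ∑ i ∈ s, ∑ j ∈ s, f i j := by
  have hsymm : ∀ φ : ι → ι → M, ∑ i ∈ s, ∑ j ∈ s, (φ i j + φ j i) =
      (∑ i ∈ s, ∑ j ∈ s, φ i j) + ∑ i ∈ s, ∑ j ∈ s, φ i j := fun φ => by
    simp only [Finset.sum_add_distrib]
    rw [Finset.sum_comm (f := fun i j => φ j i)]
  have := Finset.sum_le_sum fun i hi => Finset.sum_le_sum fun j hj => h i hi j hj
  rw [hsymm, hsymm] at this
  exact le_of_not_gt fun hlt => (add_lt_add hlt hlt).not_ge this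

namespace KConfig

variable {n k : ℕ} {c : ℕ → Bool}

lemma cnt_cblock (Γ : KConfig n k c) (b : Bool) {i : ℕ} (hi : i < Γ.t) :
    cnt c b (cblock (2 * n) Γ.s0 Γ.len i) = if Γ.col i = b then k else Γ.mino i := by
  split_ifs with h
  · exact h ▸ Γ.exact_maj i hi
  · rw [Bool.eq_not.2 (Ne.symm h)]
    rfl

def pairWeight (Γ : KConfig n k c) (i j : ℕ) : ℚ :=
  if Γ.col i ≠ Γ.col j then (k : ℚ) else max (Γ.mino i : ℚ) (Γ.mino j : ℚ)

lemma cnt_not_col_add_le_pairWeight_add (Γ : KConfig n k c) {i j : ℕ} (hi : i < Γ.t)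
    (hj : j < Γ.t) :
    (cnt c (!Γ.col i) (cblock (2 * n) Γ.s0 Γ.len j) : ℚ) +
        cnt c (!Γ.col j) (cblock (2 * n) Γ.s0 Γ.len i) ≤
      Γ.pairWeight i j + Γ.pairWeight j i := by
  rw [Γ.cnt_cblock _ hj, Γ.cnt_cblock _ hi, pairWeight, pairWeight]
  cases Γ.col i <;> cases Γ.col j <;>
    simp [add_comm, add_le_add (le_max_left _ _) (le_max_left _ _)]

lemma mul_t_le_sum_sum_pairWeight (Γ : KConfig n k c) (hbal : Balanced n c) :
    (n : ℚ) * Γ.t ≤ ∑ i ∈ Finset.range Γ.t,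
      ∑ j ∈ Finset.range Γ.t, Γ.pairWeight j ((i + Γ.t - j) % Γ.t) := by
  have hcnt : ∀ b, cnt c b (Finset.range (2 * n)) = n := Bool.forall_bool.2 ⟨hbal.2, hbal.1⟩
  calc (n : ℚ) * Γ.t
      = ∑ _i ∈ Finset.range Γ.t, (n : ℚ) := by simp [mul_comm]
    _ = ∑ i ∈ Finset.range Γ.t, ∑ j ∈ Finset.range Γ.t,
          (cnt c (!Γ.col i) (cblock (2 * n) Γ.s0 Γ.len j) : ℚ) :=
        Finset.sum_congr rfl fun i _ => by
          rw [← Nat.cast_sum, sum_cnt_cblock c _ Γ.s0 Γ.covers, hcnt]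
    _ ≤ ∑ i ∈ Finset.range Γ.t, ∑ j ∈ Finset.range Γ.t, Γ.pairWeight i j :=
        sum_sum_le_of_add_swap_le _ fun i hi j hj =>
          Γ.cnt_not_col_add_le_pairWeight_add (Finset.mem_range.1 hi) (Finset.mem_range.1 hj)
    _ = _ := by
        rw [eq_comm, Finset.sum_comm]
        exact Finset.sum_congr rfl fun j hj =>
          sum_range_sub_mod (Γ.pairWeight j) (Finset.mem_range.1 hj)

end KConfig

/-- for a uniformly random chunk matching (`M_i` pairs chunk `j`
with chunk `(i - j) mod ℓ`), the expected number of edges of the derived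
separated bichromatic matching (`k` edges for a red–blue pair, the larger of
the minority counts for a same-colored pair, half the minority count for a
chunk matched to itself) is at least `n/2`. -/
theorem random_chunk_matching_expectation
    (n k : ℕ) (c : ℕ → Bool) (hbal : Balanced n c) (Γ : KConfig n k c) :
    (n : ℚ) / 2 ≤
      (∑ i ∈ Finset.range Γ.t, (1 / 2 : ℚ) *
          ∑ j ∈ Finset.range Γ.t,
            if Γ.col j ≠ Γ.col ((i + Γ.t - j) % Γ.t) then (k : ℚ)
            else max (Γ.mino j : ℚ) (Γ.mino ((i + Γ.t - j) % Γ.t) : ℚ)) / Γ.t := by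
  rcases Nat.eq_zero_or_pos Γ.t with ht | ht
  · have hn : 2 * n = 0 := by rw [← Γ.covers, ht]; rfl
    simp [ht, show n = 0 by omega]
  · rw [← Finset.mul_sum, le_div_iff₀ (by exact_mod_cast ht)]
    have key := Γ.mul_t_le_sum_sum_pairWeight hbal
    unfold KConfig.pairWeight at key
    linarith

end SepMatchPaper
end

section
/- Let P be a set of 2n points in convex position with n red and n blue points, numbered p_0,...,p_{2n-1} clockwise. The n^2 red-blue segments can be partitioned into 2n families, each family being a separated bichromatic matching (pairwise disjoint segments crossed by a common line). Consequently, some separated bichromatic matching on P has at least n/2 edges. -/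
open scoped BigOperators

namespace SepMatchPaper

/-!
Two edges of the parallel matching `M_t = {p_a p_b : a + b ≡ t (mod 2n)}` never interleave
along the convex polygon: they are nested or separated, so the endpoints of one lie strictly on
one side of the line through the other, and the segments are disjoint. Every edge of `M_t` has
an endpoint on each closed side of the chord `p_{⌊t/2⌋} p_{⌊t/2⌋+n}`, so the line of that chord
meets all of them. Finally the `n²` red-blue edges fall into `2n` classes, so one class has at
least `n/2` of them.
-/

theorem cross_smul_add_smul_s17 (o a x y : ℝ × ℝ) {α β : ℝ} (h : α + β = 1) :
    cross o a (α • x + β • y) = α * cross o a x + β * cross o a y := by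
  simp only [cross, Prod.fst_add, Prod.snd_add, Prod.smul_fst, Prod.smul_snd, smul_eq_mul]
  linear_combination ((a.1 - o.1) * o.2 - (a.2 - o.2) * o.1) * h

theorem cross_swap (o a z : ℝ × ℝ) : cross a o z = -cross o a z := by
  simp only [cross]; ring

theorem cross_eq_zero_of_mem_segment {o a z : ℝ × ℝ} (hz : z ∈ segment ℝ o a) :
    cross o a z = 0 := by
  obtain ⟨α, β, -, -, hαβ, rfl⟩ := hz
  rw [cross_smul_add_smul_s17 _ _ _ _ hαβ]
  simp only [cross]; ring

theorem convex_setOf_cross_neg (o a : ℝ × ℝ) : Convex ℝ {z | cross o a z < 0} := by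
  intro x hx y hy α β hα hβ hαβ
  simp only [Set.mem_ofPred_eq, cross_smul_add_smul_s17 _ _ _ _ hαβ] at *
  rcases le_total (cross o a x) (cross o a y) with h | h
  · nlinarith [mul_le_mul_of_nonneg_left h hα]
  · nlinarith [mul_le_mul_of_nonneg_left h hβ]

theorem disjoint_segment_of_cross_neg {x y u v : ℝ × ℝ} (hu : cross x y u < 0)
    (hv : cross x y v < 0) : Disjoint (segment ℝ x y) (segment ℝ u v) :=
  Set.disjoint_left.2 fun _ hz hz' =>
    ((convex_setOf_cross_neg x y).segment_subset hu hv hz').ne (cross_eq_zero_of_mem_segment hz)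

theorem disjoint_segment_of_cross_pos {x y u v : ℝ × ℝ} (hu : 0 < cross x y u)
    (hv : 0 < cross x y v) : Disjoint (segment ℝ x y) (segment ℝ u v) := by
  rw [segment_symm]
  exact disjoint_segment_of_cross_neg (by rw [cross_swap]; linarith) (by rw [cross_swap]; linarith)

theorem mem_affineSpan_pair_of_cross_eq_zero {u v z : ℝ × ℝ} (huv : u ≠ v)
    (h : cross u v z = 0) : z ∈ line[ℝ, u, v] := by
  have hd : (v.1 - u.1) ^ 2 + (v.2 - u.2) ^ 2 ≠ 0 := by
    intro h0
    refine huv (Prod.ext ?_ ?_) <;> nlinarith [sq_nonneg (v.1 - u.1), sq_nonneg (v.2 - u.2)]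
  rw [mem_affineSpan_pair_iff_exists_lineMap_eq]
  -- the parameter of the orthogonal projection of `z` onto the line
  refine ⟨((z.1 - u.1) * (v.1 - u.1) + (z.2 - u.2) * (v.2 - u.2)) /
    ((v.1 - u.1) ^ 2 + (v.2 - u.2) ^ 2), ?_⟩
  simp only [cross] at h
  rw [AffineMap.lineMap_apply_module]
  ext <;> simp only [Prod.fst_add, Prod.snd_add, Prod.smul_fst, Prod.smul_snd, smul_eq_mul] <;>
    field_simp
  · linear_combination (v.2 - u.2) * h
  · linear_combination -(v.1 - u.1) * h

theorem segment_inter_affineSpan_pair_nonempty {u v a b : ℝ × ℝ} (ha : cross u v a < 0)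
    (hb : 0 < cross u v b) : (segment ℝ a b ∩ line[ℝ, u, v]).Nonempty := by
  have huv : u ≠ v := by
    rintro rfl
    simp only [cross, sub_self, zero_mul] at ha
    exact lt_irrefl 0 ha
  set θ := cross u v a / (cross u v a - cross u v b)
  have hθ0 : 0 ≤ θ := div_nonneg_of_nonpos ha.le (by linarith)
  have hθ1 : θ ≤ 1 := (div_le_one_of_neg (by linarith)).2 (by linarith)
  refine ⟨(1 - θ) • a + θ • b, ⟨1 - θ, θ, by linarith, hθ0, by ring, rfl⟩,
    mem_affineSpan_pair_of_cross_eq_zero huv ?_⟩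
  have hθ : θ * (cross u v a - cross u v b) = cross u v a := div_mul_cancel₀ _ (by linarith)
  rw [cross_smul_add_smul_s17 _ _ _ _ (by ring)]
  linear_combination -hθ

theorem exists_isLine_affineSpan_pair_subset (x y : ℝ × ℝ) :
    ∃ L, IsLine L ∧ (line[ℝ, x, y] : Set (ℝ × ℝ)) ⊆ L := by
  by_cases hxy : x = y
  · subst hxy
    refine ⟨line[ℝ, x, x + (1, 0)], ⟨_, _, by simp [Prod.ext_iff], rfl⟩, ?_⟩
    exact affineSpan_pair_le_of_mem_of_mem (left_mem_affineSpan_pair _ _ _)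
      (left_mem_affineSpan_pair _ _ _)
  · exact ⟨_, ⟨x, y, hxy, rfl⟩, subset_rfl⟩

namespace ConvexCW

variable {m : ℕ} {p : ℕ → ℝ × ℝ}

theorem cross_pos_of_mem_Ioo (hcw : ConvexCW m p) {u v w : ℕ} (hw : w ∈ Set.Ioo u v)
    (hv : v < m) : 0 < cross (p u) (p v) (p w) := by
  have := hcw u w v hw.1 hw.2 hv
  simp only [cross] at *
  linarith

theorem cross_neg_of_notMem_Icc (hcw : ConvexCW m p) {u v w : ℕ} (huv : u < v) (hv : v < m)
    (hw : w < m) (hw' : w ∉ Set.Icc u v) : cross (p u) (p v) (p w) < 0 := by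
  rcases lt_or_gt_of_ne (fun h : w = u => hw' ⟨h.ge, h ▸ huv.le⟩) with h | h
  · have := hcw w u v h huv hv
    simp only [cross] at *
    linarith
  · exact hcw u v w huv (by simp only [Set.mem_Icc, not_and, not_le] at hw'; omega) hw

theorem disjoint_segment {a b a' b' : ℕ} (hcw : ConvexCW m p) (hab : a ≠ b) (ha : a < m)
    (hb : b < m) (ha' : a' < m) (hb' : b' < m)
    (h : (a' ∈ Set.uIoo a b ∧ b' ∈ Set.uIoo a b) ∨ (a' ∉ Set.uIcc a b ∧ b' ∉ Set.uIcc a b)) :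
    Disjoint (segment ℝ (p a) (p b)) (segment ℝ (p a') (p b')) := by
  wlog hlt : a < b generalizing a b
  · rw [segment_symm]
    exact this hab.symm hb ha (by rwa [Set.uIoo_comm, Set.uIcc_comm]) (by omega)
  rw [Set.uIoo_of_lt hlt, Set.uIcc_of_lt hlt] at h
  rcases h with ⟨ha'', hb''⟩ | ⟨ha'', hb''⟩
  · exact disjoint_segment_of_cross_pos (hcw.cross_pos_of_mem_Ioo ha'' hb)
      (hcw.cross_pos_of_mem_Ioo hb'' hb)
  · exact disjoint_segment_of_cross_neg (hcw.cross_neg_of_notMem_Icc hlt hb ha' ha'')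
      (hcw.cross_neg_of_notMem_Icc hlt hb hb' hb'')

theorem segment_inter_affineSpan_pair_nonempty (hcw : ConvexCW m p) {u v a b : ℕ}
    (hv : v < m) (hb : b < m) (ha : a ∈ Set.Ioo u v) (hb' : b ∉ Set.Icc u v) :
    (segment ℝ (p a) (p b) ∩ line[ℝ, p u, p v]).Nonempty := by
  rw [segment_symm]
  exact SepMatchPaper.segment_inter_affineSpan_pair_nonempty
    (hcw.cross_neg_of_notMem_Icc (ha.1.trans ha.2) hv hb hb') (hcw.cross_pos_of_mem_Ioo ha hv)

end ConvexCW

theorem add_eq_or_eq_add_of_mod_eq {m a b t : ℕ} (ha : a < m) (hb : b < m)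
    (h : (a + b) % m = t) : a + b = t ∨ a + b = t + m := by
  rcases lt_or_ge (a + b) m with hlt | hge
  · left
    rw [← h, Nat.mod_eq_of_lt hlt]
  · right
    rw [← h, Nat.mod_eq_sub_mod hge, Nat.mod_eq_of_lt (by omega)]
    omega

theorem not_interleaved_of_add_eq {m s a b a' b' : ℕ} (ha : a < m) (hb : b < m)
    (ha' : a' < m) (hb' : b' < m) (hs : a + b = s ∨ a + b = s + m)
    (hs' : a' + b' = s ∨ a' + b' = s + m) (hab : a ≠ b) (hab' : a ≠ b') (hba' : b ≠ a')
    (hne : ¬(a = a' ∧ b = b')) :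
    (a' ∈ Set.uIoo a b ∧ b' ∈ Set.uIoo a b) ∨ (a' ∉ Set.uIcc a b ∧ b' ∉ Set.uIcc a b) := by
  rcases lt_or_gt_of_ne hab with h | h
  · rw [Set.uIoo_of_lt h, Set.uIcc_of_lt h]
    simp only [Set.mem_Ioo, Set.mem_Icc]
    omega
  · rw [Set.uIoo_of_gt h, Set.uIcc_of_gt h]
    simp only [Set.mem_Ioo, Set.mem_Icc]
    omega

/-- The bichromatic part of the parallel matching `M_t`, each edge listed red endpoint first. -/
def parallelFamily (n : ℕ) (c : ℕ → Bool) (t : ℕ) : Set (ℕ × ℕ) :=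
  {e | e.1 < 2 * n ∧ e.2 < 2 * n ∧ c e.1 = true ∧ c e.2 = false ∧ (e.1 + e.2) % (2 * n) = t}

section ParallelFamily

variable {n t : ℕ} {c : ℕ → Bool} {p : ℕ → ℝ × ℝ}

theorem add_eq_of_mem_parallelFamily {e : ℕ × ℕ} (he : e ∈ parallelFamily n c t) :
    t < 2 * n ∧ (e.1 + e.2 = t ∨ e.1 + e.2 = t + 2 * n) := by
  obtain ⟨h1, h2, -, -, h⟩ := he
  exact ⟨h ▸ Nat.mod_lt _ (by omega), add_eq_or_eq_add_of_mod_eq h1 h2 h⟩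

theorem ne_of_red_of_blue {a b : ℕ} (ha : c a = true) (hb : c b = false) : a ≠ b :=
  ne_of_apply_ne c (by rw [ha, hb]; decide)

theorem ConvexCW.disjoint_seg_of_mem_parallelFamily (hcw : ConvexCW (2 * n) p)
    {e f : ℕ × ℕ} (he : e ∈ parallelFamily n c t) (hf : f ∈ parallelFamily n c t)
    (hef : e ≠ f) : Disjoint (seg p e) (seg p f) := by
  obtain ⟨a, b⟩ := e
  obtain ⟨a', b'⟩ := f
  obtain ⟨-, hs⟩ := add_eq_of_mem_parallelFamily he
  obtain ⟨-, hs'⟩ := add_eq_of_mem_parallelFamily hf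
  obtain ⟨ha, hb, hca, hcb, -⟩ := he
  obtain ⟨ha', hb', hca', hcb', -⟩ := hf
  exact hcw.disjoint_segment (ne_of_red_of_blue hca hcb) ha hb ha' hb'
    (not_interleaved_of_add_eq ha hb ha' hb' hs hs' (ne_of_red_of_blue hca hcb)
      (ne_of_red_of_blue hca hcb') (ne_of_red_of_blue hca' hcb).symm
      fun h => hef (Prod.ext h.1 h.2))

theorem ConvexCW.seg_inter_affineSpan_pair_nonempty_of_mem_parallelFamily
    (hcw : ConvexCW (2 * n) p) {e : ℕ × ℕ} (he : e ∈ parallelFamily n c t) :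
    (seg p e ∩ line[ℝ, p (t / 2), p (t / 2 + n)]).Nonempty := by
  obtain ⟨a, b⟩ := e
  obtain ⟨ht, hs⟩ := add_eq_of_mem_parallelFamily he
  obtain ⟨ha, hb, hca, hcb, -⟩ := he
  have hab := ne_of_red_of_blue hca hcb
  have hcases : a = t / 2 ∨ a = t / 2 + n ∨ b = t / 2 ∨ b = t / 2 + n ∨
      (a ∈ Set.Ioo (t / 2) (t / 2 + n) ∧ b ∉ Set.Icc (t / 2) (t / 2 + n)) ∨
      (b ∈ Set.Ioo (t / 2) (t / 2 + n) ∧ a ∉ Set.Icc (t / 2) (t / 2 + n)) := by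
    simp only [Set.mem_Ioo, Set.mem_Icc]
    omega
  rcases hcases with rfl | rfl | rfl | rfl | ⟨hin, hout⟩ | ⟨hin, hout⟩
  · exact ⟨_, left_mem_segment ℝ _ _, left_mem_affineSpan_pair ℝ _ _⟩
  · exact ⟨_, left_mem_segment ℝ _ _, right_mem_affineSpan_pair ℝ _ _⟩
  · exact ⟨_, right_mem_segment ℝ _ _, left_mem_affineSpan_pair ℝ _ _⟩
  · exact ⟨_, right_mem_segment ℝ _ _, right_mem_affineSpan_pair ℝ _ _⟩
  · exact hcw.segment_inter_affineSpan_pair_nonempty (by omega) hb hin hout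
  · rw [seg, segment_symm]
    exact hcw.segment_inter_affineSpan_pair_nonempty (by omega) ha hin hout

theorem ConvexCW.sepMatchSet_parallelFamily (hcw : ConvexCW (2 * n) p) (c : ℕ → Bool) (t : ℕ) :
    SepMatchSet (2 * n) p (parallelFamily n c t) := by
  obtain ⟨L, hL, hsub⟩ := exists_isLine_affineSpan_pair_subset (p (t / 2)) (p (t / 2 + n))
  refine ⟨fun e he => ⟨he.1, he.2.1, ne_of_red_of_blue he.2.2.1 he.2.2.2.1⟩,
    fun e he f hf => hcw.disjoint_seg_of_mem_parallelFamily he hf, L, hL, fun e he => ?_⟩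
  exact (hcw.seg_inter_affineSpan_pair_nonempty_of_mem_parallelFamily he).mono
    (Set.inter_subset_inter_right _ hsub)

end ParallelFamily

open Finset

def redBlueEdges (n : ℕ) (c : ℕ → Bool) : Finset (ℕ × ℕ) :=
  {x ∈ range (2 * n) | c x = true} ×ˢ {x ∈ range (2 * n) | c x = false}

section RedBlueEdges

variable {n : ℕ} {c : ℕ → Bool}

theorem card_redBlueEdges (hbal : Balanced n c) : #(redBlueEdges n c) = n * n := by
  rw [redBlueEdges, card_product]
  exact congrArg₂ _ hbal.1 hbal.2

theorem coe_filter_redBlueEdges (t : ℕ) :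
    (({e ∈ redBlueEdges n c | (e.1 + e.2) % (2 * n) = t} : Finset (ℕ × ℕ)) : Set (ℕ × ℕ)) =
      parallelFamily n c t := by
  ext e
  simp [redBlueEdges, parallelFamily, and_assoc, and_left_comm]

theorem exists_le_card_filter_redBlueEdges (hbal : Balanced n c) :
    ∃ t, (n : ℚ) / 2 ≤ #{e ∈ redBlueEdges n c | (e.1 + e.2) % (2 * n) = t} := by
  rcases n.eq_zero_or_pos with rfl | hn
  · exact ⟨0, by simp⟩
  obtain ⟨t, -, ht⟩ := exists_le_card_fiber_of_nsmul_le_card_of_maps_to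
    (f := fun e : ℕ × ℕ => (e.1 + e.2) % (2 * n)) (t := range (2 * n)) (b := (n : ℚ) / 2)
    (fun e _ => mem_range.2 (Nat.mod_lt _ (by omega))) ⟨0, mem_range.2 (by omega)⟩
    (by rw [card_range, card_redBlueEdges hbal, nsmul_eq_mul]; push_cast; linarith)
  exact ⟨t, ht⟩

end RedBlueEdges

theorem mem_seg_ep (p : ℕ → ℝ × ℝ) (e : ℕ × ℕ) (s : Bool) : p (ep e s) ∈ seg p e := by
  cases s
  · exact right_mem_segment ℝ _ _
  · exact left_mem_segment ℝ _ _

theorem SepMatchSet.exists_sepMatching {m : ℕ} {p : ℕ → ℝ × ℝ} {c : ℕ → Bool}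
    {good : Bool → Bool → Prop} {F : Finset (ℕ × ℕ)} (hF : SepMatchSet m p F)
    (hgood : ∀ e ∈ F, good (c e.1) (c e.2)) : ∃ e, SepMatching m p c good #F e := by
  obtain ⟨hwf, hdisj, L, hL, hmeet⟩ := hF
  let e : ℕ → ℕ × ℕ := fun i => if h : i < #F then F.equivFin.symm ⟨i, h⟩ else 0
  have he : ∀ i < #F, e i ∈ F := fun i hi => by simp [e, hi]
  have hinj : ∀ i < #F, ∀ j < #F, e i = e j → i = j := fun i hi j hj h => by
    simpa [e, hi, hj] using h
  refine ⟨e, fun i hi => ⟨(hwf _ (he i hi)).1, (hwf _ (he i hi)).2.1⟩,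
    fun i hi => hgood _ (he i hi), fun i j s s' hi hj hne hep => ?_,
    fun i j hi hj hij => hdisj _ (he i hi) _ (he j hj) (hij ∘ hinj i hi j hj),
    L, hL, fun i hi => hmeet _ (he i hi)⟩
  by_cases hij : i = j
  · subst hij
    have hss' : s ≠ s' := fun h => hne (h ▸ rfl)
    have h12 := (hwf _ (he i hi)).2.2
    cases s <;> cases s'
    · exact hss' rfl
    · exact h12 hep.symm
    · exact h12 hep
    · exact hss' rfl
  · exact Set.disjoint_left.1 (hdisj _ (he i hi) _ (he j hj) (hij ∘ hinj i hi j hj))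
      (mem_seg_ep p (e i) s) (hep ▸ mem_seg_ep p (e j) s')

/-- the `n²` red–blue segments of a balanced convex point set
can be partitioned into `2n` families, each a separated bichromatic matching;
consequently some separated bichromatic matching has at least `n/2` edges. -/
theorem parallel_matchings_partition
    (n : ℕ) (p : ℕ → ℝ × ℝ) (c : ℕ → Bool)
    (hcw : ConvexCW (2 * n) p) (hbal : Balanced n c) :
    (∃ φ : ℕ × ℕ → ℕ,
      (∀ a b : ℕ, a < 2 * n → b < 2 * n → c a = true → c b = false → φ (a, b) < 2 * n) ∧
      ∀ t, t < 2 * n → SepMatchSet (2 * n) p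
        {e : ℕ × ℕ | e.1 < 2 * n ∧ e.2 < 2 * n ∧ c e.1 = true ∧ c e.2 = false ∧ φ e = t}) ∧
    ∃ K e, SepMatching (2 * n) p c (· ≠ ·) K e ∧ (n : ℚ) / 2 ≤ K := by
  refine ⟨⟨fun e => (e.1 + e.2) % (2 * n), fun a b ha _ _ _ => Nat.mod_lt _ (by omega),
    fun t _ => hcw.sepMatchSet_parallelFamily c t⟩, ?_⟩
  obtain ⟨t, ht⟩ := exists_le_card_filter_redBlueEdges hbal
  have hsep := hcw.sepMatchSet_parallelFamily c t
  rw [← coe_filter_redBlueEdges] at hsep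
  obtain ⟨e, he⟩ := hsep.exists_sepMatching (c := c) (good := (· ≠ ·)) fun e he => by
    obtain ⟨-, -, hr, hb, -⟩ := (coe_filter_redBlueEdges (n := n) (c := c) t) ▸ mem_coe.2 he
    simp [hr, hb]
  exact ⟨_, e, he, ht⟩

end SepMatchPaper
end
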